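/- arXiv:2005.03937 — 5 statements merged into one kernel-verified Lean document; each statement's English description precedes it below -/
import Mathlib

section
/- Let G be a bipartite (p,q)-graph with bipartition (X,Y) admitting a set-ordered graceful labelling f. Define g by g(x) = max f(X) + min f(X) − f(x) for x ∈ X, g(y) = f(y) for y ∈ Y, and g(uv) = q + 1 − |f(u)−f(v)| for each edge uv. Then g(u) + g(uv) + g(v) = q + 1 + max f(X) + min f(X) for every edge uv ∈ E(G); that is, g is edge-magic with magic constant q + 1 + max f(X) + min f(X). -/
namespace Stmt4

/-- The induced edge label `|f u − f v|`. -/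
def lab {V : Type*} (f : V → ℕ) (u v : V) : ℕ := ((f u : ℤ) - (f v : ℤ)).natAbs

/-- `f` is a graceful labelling of the `(p,q)`-graph `G`. -/
def IsGraceful {V : Type*} [Fintype V] [DecidableEq V] (G : SimpleGraph V)
    [DecidableRel G.Adj] (f : V → ℕ) : Prop :=
  Function.Injective f ∧ (∀ v, f v ≤ G.edgeFinset.card) ∧
    {c | ∃ u v, G.Adj u v ∧ lab f u v = c} = Set.Icc 1 G.edgeFinset.card

/-- Given a set-ordered graceful labelling `f` of a bipartite `(p,q)`-graph `G` with
bipartition `(X,Y)`, the total assignment `g(x) = max f(X) + min f(X) − f(x)` on `X`,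
`g(y) = f(y)` on `Y`, `g(uv) = q + 1 − |f(u) − f(v)|` on edges, is edge-magic with
magic constant `q + 1 + max f(X) + min f(X)`. -/
theorem setOrdered_graceful_gives_edge_magic {V : Type*} [Fintype V] [DecidableEq V]
    (G : SimpleGraph V) [DecidableRel G.Adj]
    (X Y : Finset V) (hX : X.Nonempty)
    (hpart : ∀ v, v ∈ X ↔ v ∉ Y)
    (hbip : ∀ u v, G.Adj u v → (u ∈ X ∧ v ∈ Y) ∨ (u ∈ Y ∧ v ∈ X))
    (f : V → ℕ) (hgrace : IsGraceful G f)
    (hso : ∀ x ∈ X, ∀ y ∈ Y, f x < f y) :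
    ∀ u v, G.Adj u v →
      (if u ∈ X then (X.image f).max' (hX.image f) + (X.image f).min' (hX.image f) - f u
        else f u)
        + (G.edgeFinset.card + 1 - lab f u v)
        + (if v ∈ X then (X.image f).max' (hX.image f) + (X.image f).min' (hX.image f) - f v
            else f v)
      = G.edgeFinset.card + 1
          + ((X.image f).max' (hX.image f) + (X.image f).min' (hX.image f)) := by
  intro u v huv
  obtain ⟨hinj, hbd, hset⟩ := hgrace
  have hlab : lab f u v ∈ Set.Icc 1 G.edgeFinset.card := by
    rw [← hset]; exact ⟨u, v, huv, rfl⟩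
  obtain ⟨hlab1, hlabq⟩ := hlab
  rcases hbip u v huv with ⟨hu, hv⟩ | ⟨hu, hv⟩
  · have hvX : v ∉ X := fun h => (hpart v).mp h hv
    have hfu : f u ≤ (X.image f).max' (hX.image f) :=
      Finset.le_max' _ _ (Finset.mem_image_of_mem f hu)
    have hlt : f u < f v := hso u hu v hv
    have hl : lab f u v = f v - f u := by unfold lab; omega
    simp only [if_pos hu, if_neg hvX]
    omega
  · have huX : u ∉ X := fun h => (hpart u).mp h hu
    have hfv : f v ≤ (X.image f).max' (hX.image f) :=
      Finset.le_max' _ _ (Finset.mem_image_of_mem f hv)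
    have hlt : f v < f u := hso v hv u hu
    have hl : lab f u v = f u - f v := by unfold lab; omega
    simp only [if_pos hv, if_neg huX]
    omega

end Stmt4
end

section
/- The complete bipartite graph K_{n,n} admits a graceful-difference proper total coloring using colors in {1,...,3n}; consequently χ''_gdt(K_{n,n}) ≤ 3n. Explicitly, with bipartition {x₁,...,x_n} and {y₁,...,y_n}, the coloring γ(x_k) = k, γ(y_j) = 3n+1−j, γ(x_k y_j) = 3n+1−j−k satisfies ||γ(x_k) − γ(y_j)| − γ(x_k y_j)| = 0 for all edges, is a proper total coloring, and uses maximum color 3n (for n ≥ 2). -/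
namespace Stmt8

/-- Proper total coloring: adjacent vertices distinct, adjacent edges distinct, each edge
distinct from its endpoints. -/
def properTotal {V : Type*} (G : SimpleGraph V) (fV : V → ℕ) (fE : V → V → ℕ) : Prop :=
  (∀ u v, G.Adj u v → fV u ≠ fV v) ∧
  (∀ u v w, G.Adj u v → G.Adj u w → v ≠ w → fE u v ≠ fE u w) ∧
  (∀ u v, G.Adj u v → fE u v ≠ fV u ∧ fE u v ≠ fV v)

/-- A graceful-difference proper total coloring of `G` with colors in `{1,…,M}` and
constant `k`: `||f(u) − f(v)| − f(uv)| = k` for every edge `uv`. -/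
def IsGDT {V : Type*} (G : SimpleGraph V) (fV : V → ℕ) (fE : V → V → ℕ)
    (M k : ℕ) : Prop :=
  (∀ u v, fE u v = fE v u) ∧ properTotal G fV fE ∧
  (∀ v, 1 ≤ fV v ∧ fV v ≤ M) ∧
  (∀ u v, G.Adj u v → 1 ≤ fE u v ∧ fE u v ≤ M) ∧
  (∀ u v, G.Adj u v → (|(fV u : ℤ) - (fV v : ℤ)| - (fE u v : ℤ)).natAbs = k)

/-- The graceful-difference total chromatic number `χ''_gdt`. -/
noncomputable def gdtChromatic {V : Type*} (G : SimpleGraph V) : ℕ :=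
  sInf {M | ∃ fV fE k, IsGDT G fV fE M k}

/-- The explicit coloring `γ(x_k) = k`, `γ(y_j) = 3n+1−j`, `γ(x_k y_j) = 3n+1−j−k`
(here with 0-based indices) is a graceful-difference proper total coloring of `K_{n,n}`
with constant `0`, colors in `{1,…,3n}` and maximum color `3n`; hence
`χ''_gdt(K_{n,n}) ≤ 3n`. -/
theorem completeBipartite_gdt (n : ℕ) (hn : 2 ≤ n) :
    let γV : Fin n ⊕ Fin n → ℕ := fun v => match v with
      | Sum.inl k => (k : ℕ) + 1
      | Sum.inr j => 3 * n - (j : ℕ)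
    let γE : (Fin n ⊕ Fin n) → (Fin n ⊕ Fin n) → ℕ := fun a b => match a, b with
      | Sum.inl k, Sum.inr j => 3 * n - 1 - (j : ℕ) - (k : ℕ)
      | Sum.inr j, Sum.inl k => 3 * n - 1 - (j : ℕ) - (k : ℕ)
      | _, _ => 0
    IsGDT (completeBipartiteGraph (Fin n) (Fin n)) γV γE (3 * n) 0 ∧
    γV (Sum.inr ⟨0, by omega⟩) = 3 * n ∧
    gdtChromatic (completeBipartiteGraph (Fin n) (Fin n)) ≤ 3 * n := by
  intro γV γE
  have hgdt : IsGDT (completeBipartiteGraph (Fin n) (Fin n)) γV γE (3 * n) 0 := by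
    refine ⟨?_, ⟨?_, ?_, ?_⟩, ?_, ?_, ?_⟩
    · rintro (k|k) (j|j) <;> rfl
    · rintro (k|k) (j|j) h <;> simp only [completeBipartiteGraph_adj] at h <;>
        simp_all [γV] <;> [skip; skip] <;> (have := k.isLt; have := j.isLt; omega)
    · rintro (u|u) (v|v) (w|w) h1 h2 hne <;>
        simp only [completeBipartiteGraph_adj] at h1 h2 <;> simp_all [γE, Fin.ext_iff] <;>
        (try (have := u.isLt; have := v.isLt; have := w.isLt; omega))
    · rintro (k|k) (j|j) h <;> simp only [completeBipartiteGraph_adj] at h <;>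
        simp_all [γV, γE] <;> (have := k.isLt; have := j.isLt; omega)
    · rintro (v|v) <;> simp [γV] <;> (have := v.isLt; omega)
    · rintro (k|k) (j|j) h <;> simp only [completeBipartiteGraph_adj] at h <;>
        simp_all [γE] <;> (have := k.isLt; have := j.isLt; omega)
    · rintro (k|k) (j|j) h <;> simp only [completeBipartiteGraph_adj] at h <;> try simp_all
      all_goals {
        simp only [γV, γE, Int.natAbs_eq_zero, sub_eq_zero]
        have hk := k.isLt; have hj := j.isLt
        rw [abs_eq (Int.natCast_nonneg _)]; omega
      }
  refine ⟨hgdt, ?_, Nat.sInf_le ⟨γV, γE, 0, hgdt⟩⟩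
  simp [γV]

end Stmt8
end

section
/- Every bipartite graph G with vertex bipartition (X,Y) satisfies χ''_gdt(G) ≤ 3·max{|X|, |Y|}, where χ''_gdt is the graceful-difference total chromatic number. -/
namespace Stmt9

/-- Proper total coloring: adjacent vertices distinct, adjacent edges distinct, each edge
distinct from its endpoints. -/
def properTotal {V : Type*} (G : SimpleGraph V) (fV : V → ℕ) (fE : V → V → ℕ) : Prop :=
  (∀ u v, G.Adj u v → fV u ≠ fV v) ∧
  (∀ u v w, G.Adj u v → G.Adj u w → v ≠ w → fE u v ≠ fE u w) ∧
  (∀ u v, G.Adj u v → fE u v ≠ fV u ∧ fE u v ≠ fV v)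

/-- A graceful-difference proper total coloring with colors in `{1,…,M}` and constant `k`. -/
def IsGDT {V : Type*} (G : SimpleGraph V) (fV : V → ℕ) (fE : V → V → ℕ)
    (M k : ℕ) : Prop :=
  (∀ u v, fE u v = fE v u) ∧ properTotal G fV fE ∧
  (∀ v, 1 ≤ fV v ∧ fV v ≤ M) ∧
  (∀ u v, G.Adj u v → 1 ≤ fE u v ∧ fE u v ≤ M) ∧
  (∀ u v, G.Adj u v → (|(fV u : ℤ) - (fV v : ℤ)| - (fE u v : ℤ)).natAbs = k)

/-- The graceful-difference total chromatic number `χ''_gdt`. -/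
noncomputable def gdtChromatic {V : Type*} (G : SimpleGraph V) : ℕ :=
  sInf {M | ∃ fV fE k, IsGDT G fV fE M k}

/-- Every bipartite graph `G` with bipartition `(X,Y)` satisfies
`χ''_gdt(G) ≤ 3·max{|X|,|Y|}`. -/
theorem bipartite_gdt_bound {V : Type*} [Fintype V] [DecidableEq V]
    (G : SimpleGraph V) (X Y : Finset V)
    (hpart : ∀ v, v ∈ X ↔ v ∉ Y)
    (hbip : ∀ u v, G.Adj u v → (u ∈ X ∧ v ∈ Y) ∨ (u ∈ Y ∧ v ∈ X)) :
    gdtChromatic G ≤ 3 * max X.card Y.card := by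
  classical
  set m := max X.card Y.card with hm
  have hXm : X.card ≤ m := le_max_left _ _
  have hYm : Y.card ≤ m := le_max_right _ _
  set ix : V → ℕ := fun v => if h : v ∈ X then (X.equivFin ⟨v, h⟩ : ℕ) else 0 with hix
  set iy : V → ℕ := fun v => if h : v ∈ Y then (Y.equivFin ⟨v, h⟩ : ℕ) else 0 with hiy
  have hixlt : ∀ v, v ∈ X → ix v < X.card := by
    intro v hv
    simp only [hix, dif_pos hv]
    exact (X.equivFin ⟨v, hv⟩).isLt
  have hiylt : ∀ v, v ∈ Y → iy v < Y.card := by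
    intro v hv
    simp only [hiy, dif_pos hv]
    exact (Y.equivFin ⟨v, hv⟩).isLt
  have hixinj : ∀ u v, u ∈ X → v ∈ X → ix u = ix v → u = v := by
    intro u v hu hv h
    simp only [hix, dif_pos hu, dif_pos hv] at h
    have := X.equivFin.injective (Fin.val_injective h)
    exact Subtype.ext_iff.mp this
  have hiyinj : ∀ u v, u ∈ Y → v ∈ Y → iy u = iy v → u = v := by
    intro u v hu hv h
    simp only [hiy, dif_pos hu, dif_pos hv] at h
    have := Y.equivFin.injective (Fin.val_injective h)
    exact Subtype.ext_iff.mp this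
  have hY : ∀ v, v ∉ X → v ∈ Y := by
    intro v hv; have := hpart v; tauto
  have hadj : ∀ u v, G.Adj u v → (u ∈ X ∧ v ∉ X) ∨ (v ∈ X ∧ u ∉ X) := by
    intro u v h
    rcases hbip u v h with ⟨hu, hv⟩ | ⟨hu, hv⟩
    · exact Or.inl ⟨hu, fun hvX => (hpart v).mp hvX hv⟩
    · exact Or.inr ⟨hv, fun huX => (hpart u).mp huX hu⟩
  set fV : V → ℕ := fun v => if v ∈ X then ix v + 1 else m + iy v + 1 with hfV
  set fE : V → V → ℕ := fun u v =>
    if u ∈ X ∧ v ∉ X then 2 * m + 1 + iy v - ix u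
    else if v ∈ X ∧ u ∉ X then 2 * m + 1 + iy u - ix v
    else 0 with hfE
  have hfEval : ∀ u v, u ∈ X → v ∉ X → fE u v = 2 * m + 1 + iy v - ix u := by
    intro u v hu hv
    simp [hfE, hu, hv]
  have hfEsymm : ∀ u v, fE u v = fE v u := by
    intro u v
    by_cases hu : u ∈ X <;> by_cases hv : v ∈ X <;>
      simp [hfE, hu, hv]
  apply Nat.sInf_le
  refine ⟨fV, fE, m + 1, hfEsymm, ⟨?_, ?_, ?_⟩, ?_, ?_, ?_⟩
  · -- adjacent vertices distinct
    intro u v h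
    rcases hadj u v h with ⟨hu, hv⟩ | ⟨hv, hu⟩ <;>
    · have h1 := hixlt _ (by assumption)
      have h2 := hiylt _ (hY _ (by assumption))
      simp only [hfV, if_pos, if_neg, hu, hv]
      simp only [if_pos, if_neg, hu, hv, ite_true, ite_false]
      omega
  · -- adjacent edges distinct
    intro u v w huv huw hvw hEq
    rcases hadj u v huv with ⟨hu, hv⟩ | ⟨hv, hu⟩
    · rcases hadj u w huw with ⟨_, hw⟩ | ⟨hw, hu'⟩
      · rw [hfEval u v hu hv, hfEval u w hu hw] at hEq
        have h1 := hixlt _ hu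
        have h2 := hiylt _ (hY _ hv)
        have h3 := hiylt _ (hY _ hw)
        have : iy v = iy w := by omega
        exact hvw (hiyinj _ _ (hY _ hv) (hY _ hw) this)
      · exact hu' hu
    · rcases hadj u w huw with ⟨hu', _⟩ | ⟨hw, _⟩
      · exact hu hu'
      · rw [hfEsymm u v, hfEsymm u w, hfEval v u hv hu, hfEval w u hw hu] at hEq
        have h1 := hixlt _ hv
        have h2 := hixlt _ hw
        have h3 := hiylt _ (hY _ hu)
        have : ix v = ix w := by omega
        exact hvw (hixinj _ _ hv hw this)
  · -- edge ≠ endpoints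
    intro u v h
    rcases hadj u v h with ⟨hu, hv⟩ | ⟨hv, hu⟩
    · rw [hfEval u v hu hv]
      have h1 := hixlt _ hu
      have h2 := hiylt _ (hY _ hv)
      simp only [hfV, if_pos hu, if_neg hv]
      constructor <;> omega
    · rw [hfEsymm u v, hfEval v u hv hu]
      have h1 := hixlt _ hv
      have h2 := hiylt _ (hY _ hu)
      simp only [hfV, if_pos hv, if_neg hu]
      constructor <;> omega
  · -- vertex color bounds
    intro v
    by_cases hv : v ∈ X
    · have h1 := hixlt _ hv
      simp only [hfV, if_pos hv]
      omega
    · have h2 := hiylt _ (hY _ hv)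
      simp only [hfV, if_neg hv]
      omega
  · -- edge color bounds
    intro u v h
    rcases hadj u v h with ⟨hu, hv⟩ | ⟨hv, hu⟩
    · rw [hfEval u v hu hv]
      have h1 := hixlt _ hu
      have h2 := hiylt _ (hY _ hv)
      omega
    · rw [hfEsymm u v, hfEval v u hv hu]
      have h1 := hixlt _ hv
      have h2 := hiylt _ (hY _ hu)
      omega
  · -- graceful difference constant
    intro u v h
    have key : ∀ a b : V, a ∈ X → b ∉ X →
        (|(fV a : ℤ) - (fV b : ℤ)| - (fE a b : ℤ)).natAbs = m + 1 := by
      intro a b ha hb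
      rw [hfEval a b ha hb]
      have h1 := hixlt _ ha
      have h2 := hiylt _ (hY _ hb)
      simp only [hfV, if_pos ha, if_neg hb]
      have hsub : (((2 * m + 1 + iy b - ix a : ℕ)) : ℤ)
          = 2 * (m : ℤ) + 1 + iy b - ix a := by
        have : ix a ≤ 2 * m + 1 + iy b := by omega
        push_cast [Nat.cast_sub this]
        ring
      rw [hsub]
      rw [abs_of_nonpos (by push_cast; omega)]
      push_cast
      omega
    rcases hadj u v h with ⟨hu, hv⟩ | ⟨hv, hu⟩
    · exact key u v hu hv
    · rw [hfEsymm u v, abs_sub_comm]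
      exact key v u hv hu

end Stmt9
end

section
/- For paths: χ''_fdt(P₂) = 3, χ''_fdt(P₃) = 4, and χ''_fdt(P_m) = 5 for every m ≥ 4, where P_m is the path on m vertices and χ''_fdt is the minimum maximum color over all proper total colorings f with |f(u)+f(v)−f(uv)| constant on edges. -/
namespace Stmt12

/-- Proper total coloring: adjacent vertices distinct, adjacent edges distinct, each edge
distinct from its endpoints. -/
def properTotal {V : Type*} (G : SimpleGraph V) (fV : V → ℕ) (fE : V → V → ℕ) : Prop :=
  (∀ u v, G.Adj u v → fV u ≠ fV v) ∧
  (∀ u v w, G.Adj u v → G.Adj u w → v ≠ w → fE u v ≠ fE u w) ∧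
  (∀ u v, G.Adj u v → fE u v ≠ fV u ∧ fE u v ≠ fV v)

/-- A felicitous-difference proper total coloring with colors in `{1,…,M}` and constant `k`:
`|f(u) + f(v) − f(uv)| = k` for every edge `uv`. -/
def IsFDT {V : Type*} (G : SimpleGraph V) (fV : V → ℕ) (fE : V → V → ℕ)
    (M k : ℕ) : Prop :=
  (∀ u v, fE u v = fE v u) ∧ properTotal G fV fE ∧
  (∀ v, 1 ≤ fV v ∧ fV v ≤ M) ∧
  (∀ u v, G.Adj u v → 1 ≤ fE u v ∧ fE u v ≤ M) ∧
  (∀ u v, G.Adj u v → ((fV u : ℤ) + (fV v : ℤ) - (fE u v : ℤ)).natAbs = k)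

/-- The felicitous-difference total chromatic number `χ\_fdt`. -/
noncomputable def fdtChromatic {V : Type*} (G : SimpleGraph V) : ℕ :=
  sInf {M | ∃ fV fE k, IsFDT G fV fE M k}

lemma mem2 : 3 ∈ {M | ∃ fV fE k, IsFDT (SimpleGraph.pathGraph 2) fV fE M k} := by
  refine ⟨fun i => i.val + 1, fun _ _ => 3, 0, fun _ _ => rfl, ⟨?_, ?_, ?_⟩, ?_, ?_, ?_⟩
  · intro u v huv
    rw [SimpleGraph.pathGraph_adj] at huv
    have := u.is_lt; have := v.is_lt
    dsimp only; omega
  · intro u v w huv huw hvw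
    rw [SimpleGraph.pathGraph_adj] at huv huw
    have := u.is_lt; have := v.is_lt; have := w.is_lt
    exact absurd (Fin.ext (by omega) : v = w) hvw
  · intro u v huv
    have := u.is_lt; have := v.is_lt
    dsimp only; omega
  · intro v; have := v.is_lt; dsimp only; omega
  · intro u v _; dsimp only; omega
  · intro u v huv
    rw [SimpleGraph.pathGraph_adj] at huv
    have := u.is_lt; have := v.is_lt
    dsimp only; omega

lemma mem3 : 4 ∈ {M | ∃ fV fE k, IsFDT (SimpleGraph.pathGraph 3) fV fE M k} := by
  refine ⟨![2,1,3], fun i j => ![2,1,3] i + ![2,1,3] j, 0,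
    fun u v => Nat.add_comm _ _, ⟨?_, ?_, ?_⟩, ?_, ?_, ?_⟩
  · intro u v huv
    rw [SimpleGraph.pathGraph_adj] at huv
    fin_cases u <;> fin_cases v <;> simp_all
  · intro u v w huv huw hvw
    rw [SimpleGraph.pathGraph_adj] at huv huw
    fin_cases u <;> fin_cases v <;> fin_cases w <;> simp_all
  · intro u v huv
    fin_cases u <;> fin_cases v <;> simp_all
  · intro v; fin_cases v <;> simp
  · intro u v huv
    rw [SimpleGraph.pathGraph_adj] at huv
    fin_cases u <;> fin_cases v <;> simp_all
  · intro u v huv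
    fin_cases u <;> fin_cases v <;> simp_all

lemma memm (m : ℕ) : 5 ∈ {M | ∃ fV fE k, IsFDT (SimpleGraph.pathGraph m) fV fE M k} := by
  refine ⟨fun i => i.val % 3 + 1, fun i j => (i.val % 3 + 1) + (j.val % 3 + 1), 0,
    fun u v => Nat.add_comm _ _, ⟨?_, ?_, ?_⟩, ?_, ?_, ?_⟩
  · intro u v huv
    rw [SimpleGraph.pathGraph_adj] at huv
    dsimp only; omega
  · intro u v w huv huw hvw
    rw [SimpleGraph.pathGraph_adj] at huv huw
    have : (v : ℕ) ≠ (w : ℕ) := fun h => hvw (Fin.ext h)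
    dsimp only; omega
  · intro u v _; dsimp only; omega
  · intro v; dsimp only; omega
  · intro u v huv
    rw [SimpleGraph.pathGraph_adj] at huv
    dsimp only; omega
  · intro u v _; dsimp only; omega


lemma key3 (M a b c e1 e2 k : ℕ) (hM : M ≤ 3)
    (h : 1≤a ∧ a≤M ∧ 1≤b ∧ b≤M ∧ 1≤c ∧ c≤M ∧ 1≤e1 ∧ e1≤M ∧ 1≤e2 ∧ e2≤M)
    (hne : a≠b ∧ b≠c ∧ e1≠e2 ∧ e1≠a ∧ e1≠b ∧ e2≠b ∧ e2≠c)
    (k1 : ((a:ℤ)+b-e1).natAbs=k) (k2 : ((b:ℤ)+c-e2).natAbs=k) : False := by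
  omega

lemma key4 (M a b c d e1 e2 e3 k : ℕ) (hM : M ≤ 4)
    (h : 1≤a ∧ a≤M ∧ 1≤b ∧ b≤M ∧ 1≤c ∧ c≤M ∧ 1≤d ∧ d≤M ∧
      1≤e1 ∧ e1≤M ∧ 1≤e2 ∧ e2≤M ∧ 1≤e3 ∧ e3≤M)
    (hne : a≠b ∧ b≠c ∧ c≠d ∧ e1≠e2 ∧ e2≠e3 ∧ e1≠a ∧ e1≠b ∧ e2≠b ∧ e2≠c ∧ e3≠c ∧ e3≠d)
    (k1 : ((a:ℤ)+b-e1).natAbs=k) (k2 : ((b:ℤ)+c-e2).natAbs=k)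
    (k3 : ((c:ℤ)+d-e3).natAbs=k) : False := by
  rcases Nat.lt_or_ge M 4 with h4 | h4
  · omega
  · have : M = 4 := by omega
    subst this
    omega

set_option maxHeartbeats 1600000 in
set_option maxHeartbeats 1600000 in
/-- `χ''_fdt(P₂) = 3`, `χ''_fdt(P₃) = 4`, and `χ''_fdt(P_m) = 5` for every `m ≥ 4`. -/
theorem path_fdt :
    fdtChromatic (SimpleGraph.pathGraph 2) = 3 ∧
    fdtChromatic (SimpleGraph.pathGraph 3) = 4 ∧
    ∀ m, 4 ≤ m → fdtChromatic (SimpleGraph.pathGraph m) = 5 := by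
  have adj : ∀ (n i j : ℕ) (hi : i < n) (hj : j < n), i + 1 = j →
      (SimpleGraph.pathGraph n).Adj ⟨i, hi⟩ ⟨j, hj⟩ := by
    intro n i j hi hj h
    rw [SimpleGraph.pathGraph_adj]
    left; exact h
  refine ⟨?_, ?_, ?_⟩
  · refine le_antisymm (Nat.sInf_le mem2) (le_csInf ⟨3, mem2⟩ ?_)
    rintro M ⟨fV, fE, k, hsym, ⟨hv, he, hev⟩, hbv, hbe, hk⟩
    have h01 := adj 2 0 1 (by omega) (by omega) rfl
    have d01 := hv _ _ h01
    have b0 := hbv ⟨0, by omega⟩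
    have b1 := hbv ⟨1, by omega⟩
    have be := hbe _ _ h01
    have ee := hev _ _ h01
    omega
  · refine le_antisymm (Nat.sInf_le mem3) (le_csInf ⟨4, mem3⟩ ?_)
    rintro M ⟨fV, fE, k, hsym, ⟨hv, he, hev⟩, hbv, hbe, hk⟩
    have h01 := adj 3 0 1 (by omega) (by omega) rfl
    have h12 := adj 3 1 2 (by omega) (by omega) rfl
    have d01 := hv _ _ h01
    have d12 := hv _ _ h12
    have de := he _ _ _ h01.symm h12 (by intro h; exact absurd (congrArg Fin.val h) (by norm_num))
    have s01 := hsym (⟨1, by omega⟩ : Fin 3) ⟨0, by omega⟩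
    have b0 := hbv ⟨0, by omega⟩
    have b1 := hbv ⟨1, by omega⟩
    have b2 := hbv ⟨2, by omega⟩
    have be1 := hbe _ _ h01
    have be2 := hbe _ _ h12
    have ee1 := hev _ _ h01
    have ee2 := hev _ _ h12
    have k1 := hk _ _ h01
    have k2 := hk _ _ h12
    by_contra hM
    exact key3 M _ _ _ _ _ k (by omega) ⟨b0.1, b0.2, b1.1, b1.2, b2.1, b2.2,
      be1.1, be1.2, be2.1, be2.2⟩
      ⟨d01, d12, by omega, ee1.1.symm ∘ Eq.symm, ee1.2.symm ∘ Eq.symm,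
        ee2.1.symm ∘ Eq.symm, ee2.2.symm ∘ Eq.symm⟩ k1 k2
  · intro m hm
    refine le_antisymm (Nat.sInf_le (memm m)) (le_csInf ⟨5, memm m⟩ ?_)
    rintro M ⟨fV, fE, k, hsym, ⟨hv, he, hev⟩, hbv, hbe, hk⟩
    have p0 : (0:ℕ) < m := by omega
    have p1 : (1:ℕ) < m := by omega
    have p2 : (2:ℕ) < m := by omega
    have p3 : (3:ℕ) < m := by omega
    have h01 := adj m 0 1 p0 p1 rfl
    have h12 := adj m 1 2 p1 p2 rfl
    have h23 := adj m 2 3 p2 p3 rfl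
    have d01 := hv _ _ h01
    have d12 := hv _ _ h12
    have d23 := hv _ _ h23
    have de1 := he _ _ _ h01.symm h12
      (by intro h; exact absurd (congrArg Fin.val h) (by norm_num))
    have de2 := he _ _ _ h12.symm h23
      (by intro h; exact absurd (congrArg Fin.val h) (by norm_num))
    have s01 := hsym (⟨1, p1⟩ : Fin m) ⟨0, p0⟩
    have s12 := hsym (⟨2, p2⟩ : Fin m) ⟨1, p1⟩
    have b0 := hbv ⟨0, p0⟩
    have b1 := hbv ⟨1, p1⟩
    have b2 := hbv ⟨2, p2⟩
    have b3 := hbv ⟨3, p3⟩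
    have be1 := hbe _ _ h01
    have be2 := hbe _ _ h12
    have be3 := hbe _ _ h23
    have ee1 := hev _ _ h01
    have ee2 := hev _ _ h12
    have ee3 := hev _ _ h23
    have k1 := hk _ _ h01
    have k2 := hk _ _ h12
    have k3 := hk _ _ h23
    by_contra hM
    exact key4 M _ _ _ _ _ _ _ k (by omega) ⟨b0.1, b0.2, b1.1, b1.2, b2.1, b2.2, b3.1, b3.2,
      be1.1, be1.2, be2.1, be2.2, be3.1, be3.2⟩
      ⟨d01, d12, d23, by omega, by omega, ee1.1.symm ∘ Eq.symm, ee1.2.symm ∘ Eq.symm,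
        ee2.1.symm ∘ Eq.symm, ee2.2.symm ∘ Eq.symm,
        ee3.1.symm ∘ Eq.symm, ee3.2.symm ∘ Eq.symm⟩ k1 k2 k3



end Stmt12
end

section
/- For every n ≥ 3, the complete graph K_n admits an edge-magic proper total coloring with constant 3n and maximum color at most 3(n−1): coloring vertex i with i (for i = 1,...,n) and edge ij with 3n − i − j gives f(i) + f(ij) + f(j) = 3n for all edges, and this is a proper total coloring with colors in {1,...,3(n−1)}; hence χ''_emt(K_n) ≤ 3(n−1), and consequently χ''_emt(G) ≤ 3(n−1) for every simple graph G on n vertices. -/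
namespace Stmt16

/-- Proper total coloring: adjacent vertices distinct, adjacent edges distinct, each edge
distinct from its endpoints. -/
def properTotal {V : Type*} (G : SimpleGraph V) (fV : V → ℕ) (fE : V → V → ℕ) : Prop :=
  (∀ u v, G.Adj u v → fV u ≠ fV v) ∧
  (∀ u v w, G.Adj u v → G.Adj u w → v ≠ w → fE u v ≠ fE u w) ∧
  (∀ u v, G.Adj u v → fE u v ≠ fV u ∧ fE u v ≠ fV v)

/-- An edge-magic proper total coloring with colors in `{1,…,M}` and constant `c`:
`f(u) + f(uv) + f(v) = c` for every edge `uv`. -/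
def IsEMT {V : Type*} (G : SimpleGraph V) (fV : V → ℕ) (fE : V → V → ℕ)
    (M c : ℕ) : Prop :=
  (∀ u v, fE u v = fE v u) ∧ properTotal G fV fE ∧
  (∀ v, 1 ≤ fV v ∧ fV v ≤ M) ∧
  (∀ u v, G.Adj u v → 1 ≤ fE u v ∧ fE u v ≤ M) ∧
  (∀ u v, G.Adj u v → fV u + fE u v + fV v = c)

/-- The edge-magic total chromatic number `χ\_emt`. -/
noncomputable def emtChromatic {V : Type*} (G : SimpleGraph V) : ℕ :=
  sInf {M | ∃ fV fE c, IsEMT G fV fE M c}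

theorem emt_any (n : ℕ) (hn : 3 ≤ n) (G : SimpleGraph (Fin n)) :
    IsEMT G (fun i => (i : ℕ) + 1)
      (fun i j => 3 * n - 2 - (i : ℕ) - (j : ℕ)) (3 * (n - 1)) (3 * n) := by
  refine ⟨fun u v => by dsimp; omega, ⟨?_, ?_, ?_⟩, ?_, ?_, ?_⟩
  · intro u v h
    have := G.ne_of_adj h
    have : (u : ℕ) ≠ v := fun e => this (Fin.ext e)
    dsimp; omega
  · intro u v w huv huw hvw
    have h1 : (v : ℕ) ≠ w := fun e => hvw (Fin.ext e)
    have h2 := u.isLt; have h3 := v.isLt; have h4 := w.isLt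
    dsimp; omega
  · intro u v h
    have h0 : (u : ℕ) ≠ v := fun e => G.ne_of_adj h (Fin.ext e)
    have h2 := u.isLt; have h3 := v.isLt
    dsimp; omega
  · intro v
    have h3 := v.isLt
    dsimp; omega
  · intro u v h
    have h0 : (u : ℕ) ≠ v := fun e => G.ne_of_adj h (Fin.ext e)
    have h2 := u.isLt; have h3 := v.isLt
    dsimp; omega
  · intro u v h
    have h0 : (u : ℕ) ≠ v := fun e => G.ne_of_adj h (Fin.ext e)
    have h2 := u.isLt; have h3 := v.isLt
    dsimp; omega

/-- For `n ≥ 3`, coloring vertex `i` of `K_n` with `i` and edge `ij` with `3n − i − j`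
(1-based; here 0-based `Fin n`) gives an edge-magic proper total coloring with constant
`3n` and maximum color at most `3(n−1)`; hence `χ''_emt(K_n) ≤ 3(n−1)`, and consequently
`χ''_emt(G) ≤ 3(n−1)` for every simple graph `G` on `n` vertices. -/
theorem complete_emt (n : ℕ) (hn : 3 ≤ n) :
    IsEMT (⊤ : SimpleGraph (Fin n)) (fun i => (i : ℕ) + 1)
      (fun i j => 3 * n - 2 - (i : ℕ) - (j : ℕ)) (3 * (n - 1)) (3 * n) ∧
    emtChromatic (⊤ : SimpleGraph (Fin n)) ≤ 3 * (n - 1) ∧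
    ∀ G : SimpleGraph (Fin n), emtChromatic G ≤ 3 * (n - 1) := by
  refine ⟨emt_any n hn ⊤, ?_, fun G => ?_⟩
  · exact Nat.sInf_le ⟨_, _, _, emt_any n hn ⊤⟩
  · exact Nat.sInf_le ⟨_, _, _, emt_any n hn G⟩

end Stmt16
end
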